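/- A unary semigroup S satisfies all the identities of Σ_ref if and only if S satisfies every unary semigroup identity u ≈ v (u, v unary semigroup words over a countably infinite alphabet X) that holds in the adjacency semigroup A(H) of every reflexive graph H. In other words, Σ_ref is an identity basis for the variety of unary semigroups generated by the adjacency semigroups of all reflexive graphs. -/

import Mathlib

/-- Multiplication of the adjacency semigroup `A(G)` of a graph `G = ⟨V; r⟩`:
the carrier is `Option (V × V)` with `none` playing the role of the zero element. -/
noncomputable def adjMul {V : Type*} (r : V → V → Prop) :
    Option (V × V) → Option (V × V) → Option (V × V)
  | some (x, y), some (z, t) =>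
      @ite _ (r y z) (Classical.propDecidable _) (some (x, t)) none
  | _, _ => none

/-- Reversion in the adjacency semigroup: `(x,y)' = (y,x)` and `0' = 0`. -/
def adjStar {V : Type*} : Option (V × V) → Option (V × V)
  | some (x, y) => some (y, x)
  | none => none

/-- Unary semigroup words over an alphabet `X`: letters, products, and reversals. -/
inductive UWord (X : Type*) where
  | letter : X → UWord X
  | mul : UWord X → UWord X → UWord X
  | star : UWord X → UWord X

namespace UWord

variable {X : Type*}

/-- Evaluation of a unary semigroup word in a unary semigroup under an
assignment of the letters. -/
def eval {S : Type*} [Mul S] [Star S] (θ : X → S) : UWord X → S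
  | .letter x => θ x
  | .mul u v => eval θ u * eval θ v
  | .star u => Star.star (eval θ u)

/-- Evaluation of a unary semigroup word in the adjacency semigroup of the
graph `⟨V; r⟩` under an assignment `θ` of the letters. -/
noncomputable def evalA {V : Type*} (r : V → V → Prop) (θ : X → Option (V × V)) :
    UWord X → Option (V × V)
  | .letter x => θ x
  | .mul u v => adjMul r (evalA r θ u) (evalA r θ v)
  | .star u => adjStar (evalA r θ u)

/-- The set of letters occurring in a word. -/
def letters : UWord X → Set X
  | .letter x => {x}
  | .mul u v => letters u ∪ letters v
  | .star u => letters u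

/-- Vertices of the graph `G[u]` of a word: `(x, false)` is the left vertex
`ℓ_x` and `(x, true)` is the right vertex `r_x` of the letter `x`. -/
abbrev Vtx (X : Type*) := X × Bool

/-- The pair (initial vertex, final vertex) of the graph `G[u]` of a word `u`. -/
def ends : UWord X → Vtx X × Vtx X
  | .letter x => ((x, false), (x, true))
  | .mul u v => ((ends u).1, (ends v).2)
  | .star u => ((ends u).2, (ends u).1)

/-- The edge set of the graph `G[u]` of a word `u`. -/
def edges : UWord X → Set (Vtx X × Vtx X)
  | .letter _ => ∅
  | .mul u v => edges u ∪ edges v ∪ {((ends u).2, (ends v).1)}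
  | .star u => edges u

end UWord

/-- Given an assignment `θ` of letters to (nonzero) pairs, the vertex `ℓ_x`
corresponds to the left coordinate `i_x` of `θ x`, and the vertex `r_x` to the
right coordinate `j_x`. -/
def coordOf {X V : Type*} (θ : X → V × V) : UWord.Vtx X → V
  | (x, false) => (θ x).1
  | (x, true) => (θ x).2


/-!
An identity `u ≈ v` holds in the adjacency semigroups of all reflexive graphs iff `u` and `v` have
the same letters, the same initial and final vertices and, up to loops, the same edges in their
graphs `G[u]`, `G[v]`: evaluating in `A(G[u])` made reflexive, with `x ↦ (ℓ_x, r_x)`, detects all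
three. The identities of `Σ_ref` pass this test.

Conversely, in a model `S` of `Σ_ref` the elements `x x'` and `x' x` are projections attached to
the vertices `ℓ_x` and `r_x`, and a word evaluates to the value of a walk through its graph whose
steps traverse letters, and edges `(a, b)` valued `e_a e_b`, in either direction. Values of closed
walks at `a` lie in `e_a S e_a`, which `xyxzx ≈ xzxyxzx ≈ xzxyx` turns into a semilattice.
Inserting `t t'` into a closed walk that already traverses the step `t` does not change its value,
so closed walks with the same steps up to loops have the same value; an arbitrary walk `w` is
handled through the closed walks `w w'` and `w' w`, since `w = w w' w`.
-/

structure SigmaRef (S : Type*) [Semigroup S] [Star S] : Prop where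
  star_star : ∀ x : S, star (star x) = x
  mul_star_mul : ∀ x y z : S, x * star (y * z) = star (y * star (x * star z))
  star_mul_mul : ∀ x y z : S, star (x * y) * z = star (star (star x * z) * y)
  mul_star_mul_self : ∀ x : S, x * star x * x = x
  star_mul_star_self : ∀ x : S, star (x * star x) = x * star x
  cube : ∀ x : S, x * x * x = x * x
  sandwich_swap : ∀ x y z : S, x * y * x * z * x = x * z * x * y * x * z * x
  sandwich_drop : ∀ x y z : S, x * z * x * y * x * z * x = x * z * x * y * x
  star_sandwich_left : ∀ x y z : S, star x * y * x * z * x = star (x * z * x) * y * x * z * x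
  star_sandwich_right : ∀ x y z : S,
    x * y * x * z * star x = x * y * x * z * star (x * y * x)

namespace SigmaRef

variable {S : Type*} [Semigroup S] [Star S] (H : SigmaRef S)
include H

lemma star_mul_self_mul_star (x : S) : star x * x * star x = star x := by
  simpa only [H.star_star] using H.mul_star_mul_self (star x)

lemma mul_star_mul_self_mul (x y : S) : x * (star x * (x * y)) = x * y := by
  rw [← mul_assoc, ← mul_assoc, H.mul_star_mul_self]

lemma star_mul_self_mul_star_mul (x y : S) : star x * (x * (star x * y)) = star x * y := by
  rw [← mul_assoc, ← mul_assoc, H.star_mul_self_mul_star]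

lemma isStarProjection_mul_star (x : S) : IsStarProjection (x * star x) where
  isIdempotentElem := by rw [IsIdempotentElem, ← mul_assoc, H.mul_star_mul_self]
  isSelfAdjoint := H.star_mul_star_self x

lemma isStarProjection_star_mul (x : S) : IsStarProjection (star x * x) := by
  simpa only [H.star_star] using H.isStarProjection_mul_star (star x)

lemma commute_of_mem_corner {e a b : S} (ha₁ : e * a = a) (ha₂ : a * e = a)
    (hb₁ : e * b = b) (hb₂ : b * e = b) : Commute a b :=
  calc a * b = e * a * e * b * e := by rw [ha₁, ha₂, mul_assoc, hb₂]
    _ = e * b * e * a * e := by rw [H.sandwich_swap, H.sandwich_drop]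
    _ = b * a := by rw [hb₁, hb₂, mul_assoc, ha₂]

lemma isIdempotentElem_of_mem_corner {e a : S} (ha₁ : e * a = a) (ha₂ : a * e = a) :
    IsIdempotentElem a := by
  have h := H.sandwich_drop e e a
  simp only [ha₁, ha₂] at h
  rwa [mul_assoc, ha₂] at h

variable {e : S} (he : IsStarProjection e)
include he

lemma mul_star_eq_of_mul_eq {p : S} (hp : p * e = p) : e * star p = star p := by
  simpa only [he.isSelfAdjoint.star_eq, he.isIdempotentElem.eq, hp] using H.mul_star_mul e p e

lemma star_mul_eq_of_mul_eq {p : S} (hp : e * p = p) : star p * e = star p := by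
  simpa only [he.isSelfAdjoint.star_eq, he.isIdempotentElem.eq, hp] using H.star_mul_mul e p e

lemma star_mul_of_mul_eq_of_mul_eq {p q : S} (hp : p * e = p) (hq : e * q = q) :
    star (p * q) = star q * star p := by
  simpa only [he.isSelfAdjoint.star_eq, H.mul_star_eq_of_mul_eq he hp, H.star_star, hq]
    using (H.star_mul_mul e q (star p)).symm

end SigmaRef

open UWord (Vtx)
open Quiver (Path Hom)

namespace WordGraph

variable {X : Type*}

/-- The edges of the graph of a word: each letter `x` is an edge `ℓ_x → r_x`, besides the
junction edges of `UWord.edges`. -/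
inductive Item (X : Type*) where
  | letter : X → Item X
  | edge : Vtx X × Vtx X → Item X

namespace Item

def src : Item X → Vtx X
  | letter x => (x, false)
  | edge e => e.1

def dst : Item X → Vtx X
  | letter x => (x, true)
  | edge e => e.2

def loops : Set (Item X) := {i | i.src = i.dst}

end Item

inductive Step : Vtx X → Vtx X → Type _ where
  | fwd (i : Item X) : Step i.src i.dst
  | bwd (i : Item X) : Step i.dst i.src

instance : Quiver (Vtx X) := ⟨Step⟩

def Step.reverse {a b : Vtx X} : Step a b → Step b a
  | .fwd i => .bwd i
  | .bwd i => .fwd i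

instance : Quiver.HasReverse (Vtx X) := ⟨Step.reverse⟩

def Step.letter (x : X) : Step (x, false) (x, true) := .fwd (.letter x)

def Step.edge (a b : Vtx X) : Step a b := .fwd (.edge (a, b))

def Step.item {a b : Vtx X} : Step a b → Item X
  | .fwd i => i
  | .bwd i => i

lemma Step.item_reverse {a b : Vtx X} (s : Step a b) :
    Step.item (Quiver.reverse (V := Vtx X) s) = Step.item s := by
  cases s <;> rfl

def _root_.Quiver.Path.items : ∀ {a b : Vtx X}, Path a b → Set (Item X)
  | _, _, .nil => ∅
  | _, _, .cons p s => insert (Step.item s) p.items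

lemma items_comp {a b c : Vtx X} (p : Path a b) (q : Path b c) :
    (p.comp q).items = p.items ∪ q.items := by
  induction q with
  | nil => rw [Path.comp_nil, Path.items, Set.union_empty]
  | cons q s ih => rw [Path.comp_cons, Path.items, Path.items, ih, Set.union_insert]

lemma items_reverse {a b : Vtx X} (p : Path a b) : p.reverse.items = p.items := by
  induction p with
  | nil => rfl
  | cons p s ih =>
    rw [Path.reverse, items_comp, ih, Hom.toPath, Path.items, Path.items, Step.item_reverse,
      Path.items, Set.insert_union, Set.empty_union]

lemma exists_eq_comp_of_mem_items {a b : Vtx X} {i : Item X} (p : Path a b)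
    (hi : i ∈ p.items) :
    ∃ (c d : Vtx X) (Y : Path a c) (s : Step c d) (Z : Path d b),
      s.item = i ∧ p = (Y.cons s).comp Z := by
  induction p with
  | nil => rw [Path.items] at hi; exact absurd hi (Set.notMem_empty i)
  | cons p s ih =>
    rw [Path.items] at hi
    rcases hi with rfl | hi
    · exact ⟨_, _, p, s, .nil, rfl, rfl⟩
    · obtain ⟨c, d, Y, t, Z, ht, rfl⟩ := ih hi
      exact ⟨c, d, Y, t, Z.cons s, ht, rfl⟩

/-- The junction edge is inserted even when `u.ends.2 = v.ends.1`; it is then a loop. -/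
def _root_.UWord.walk : (u : UWord X) → Path u.ends.1 u.ends.2
  | .letter x => Hom.toPath (Step.letter x)
  | .mul u v => ((walk u).cons (Step.edge u.ends.2 v.ends.1)).comp (walk v)
  | .star u => (walk u).reverse

lemma items_walk (u : UWord X) :
    u.walk.items = Item.letter '' u.letters ∪ Item.edge '' u.edges := by
  induction u with
  | letter x =>
    show (Hom.toPath (Step.letter x)).items = _
    rw [Hom.toPath, Path.items, Path.items, insert_empty_eq]
    simp only [UWord.letters, UWord.edges, Set.image_singleton, Set.image_empty, Set.union_empty]
    rfl
  | mul u v ihu ihv =>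
    show ((u.walk.cons (Step.edge u.ends.2 v.ends.1)).comp v.walk :
      Path u.ends.1 v.ends.2).items = _
    rw [items_comp, Path.items, ihu, ihv]
    simp only [UWord.letters, UWord.edges, Step.item, Set.image_union, Set.image_singleton]
    ext
    simp only [Set.mem_union, Set.mem_insert_iff, Set.mem_singleton_iff]
    tauto
  | star u ih =>
    show (u.walk.reverse : Path u.ends.2 u.ends.1).items = _
    rw [items_reverse, ih]
    rfl

lemma items_walk_sdiff_loops (u : UWord X) :
    u.walk.items \ Item.loops =
      Item.letter '' u.letters ∪ Item.edge '' (u.edges \ Set.diagonal (Vtx X)) := by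
  rw [items_walk]
  ext (x | e) <;> simp [Item.loops, Item.src, Item.dst]

section Values

variable {S : Type*} [Semigroup S] [Star S] (θ : X → S)

def vertexProj : Vtx X → S
  | (x, false) => θ x * star (θ x)
  | (x, true) => star (θ x) * θ x

def Item.val : Item X → S
  | .letter x => θ x
  | .edge e => vertexProj θ e.1 * vertexProj θ e.2

def Step.val {a b : Vtx X} : Step a b → S
  | .fwd i => i.val θ
  | .bwd i => star (i.val θ)

/-- The empty walk at `a` is valued `vertexProj θ a`, which all walks from or to `a` absorb; this
makes `val_comp` hold without exceptions. -/
def _root_.Quiver.Path.val : ∀ {a b : Vtx X}, Path a b → S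
  | a, _, .nil => vertexProj θ a
  | _, _, .cons p s => p.val * Step.val θ s

lemma Step.val_edge (a b : Vtx X) :
    Step.val θ (Step.edge a b) = vertexProj θ a * vertexProj θ b :=
  rfl

variable {θ} (H : SigmaRef S)
include H

lemma isStarProjection_vertexProj (a : Vtx X) : IsStarProjection (vertexProj θ a) := by
  obtain ⟨x, _ | _⟩ := a
  exacts [H.isStarProjection_mul_star _, H.isStarProjection_star_mul _]

lemma Step.val_reverse {a b : Vtx X} (s : Step a b) :
    Step.val θ (Quiver.reverse (V := Vtx X) s) = star (Step.val θ s) := by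
  cases s
  exacts [rfl, (H.star_star _).symm]

lemma Step.vertexProj_mul_val {a b : Vtx X} (s : Step a b) :
    vertexProj θ a * Step.val θ s = Step.val θ s := by
  have hp := isStarProjection_vertexProj (θ := θ) H
  rcases s with (_ | ⟨a, b⟩) | (_ | ⟨a, b⟩)
  · exact H.mul_star_mul_self _
  · simp only [Step.val, Item.val, Item.src, ← mul_assoc, (hp a).isIdempotentElem.eq]
  · exact H.star_mul_self_mul_star _
  · exact H.mul_star_eq_of_mul_eq (hp b) (by rw [Item.val, mul_assoc, (hp b).isIdempotentElem.eq])

lemma Step.val_mul_vertexProj {a b : Vtx X} (s : Step a b) :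
    Step.val θ s * vertexProj θ b = Step.val θ s := by
  have hp := isStarProjection_vertexProj (θ := θ) H
  rcases s with (_ | ⟨a, b⟩) | (_ | ⟨a, b⟩)
  · exact (mul_assoc _ _ _).symm.trans (H.mul_star_mul_self _)
  · simp only [Step.val, Item.val, Item.dst, mul_assoc, (hp b).isIdempotentElem.eq]
  · exact (mul_assoc _ _ _).symm.trans (H.star_mul_self_mul_star _)
  · exact H.star_mul_eq_of_mul_eq (hp a) (by rw [Item.val, ← mul_assoc, (hp a).isIdempotentElem.eq])

lemma Step.val_eq_vertexProj_of_mem_loops {a b : Vtx X} (s : Step a b)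
    (hs : s.item ∈ Item.loops) : Step.val θ s = vertexProj θ a := by
  have hp := isStarProjection_vertexProj (θ := θ) H
  rcases s with (_ | ⟨a, b⟩) | (_ | ⟨a, b⟩) <;>
    simp only [Step.item, Item.loops, Set.mem_ofPred_eq, Item.src, Item.dst, Prod.mk.injEq,
      Bool.false_eq_true, and_false] at hs <;> subst hs
  · exact (hp a).isIdempotentElem.eq
  · exact (congrArg star (hp a).isIdempotentElem.eq).trans (hp a).isSelfAdjoint.star_eq

lemma Step.val_eq_or_eq_star_of_item_eq {a b c d : Vtx X} (s : Step a b) (t : Step c d)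
    (h : s.item = t.item) :
    (a = c ∧ b = d ∧ Step.val θ s = Step.val θ t) ∨
      (a = d ∧ b = c ∧ Step.val θ s = star (Step.val θ t)) := by
  cases s <;> cases t <;> cases h
  exacts [.inl ⟨rfl, rfl, rfl⟩, .inr ⟨rfl, rfl, (H.star_star _).symm⟩, .inr ⟨rfl, rfl, rfl⟩,
    .inl ⟨rfl, rfl, rfl⟩]

lemma vertexProj_mul_val {a b : Vtx X} (p : Path a b) : vertexProj θ a * p.val θ = p.val θ := by
  induction p with
  | nil => rw [Path.val, (isStarProjection_vertexProj H a).isIdempotentElem.eq]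
  | cons p s ih => rw [Path.val, ← mul_assoc, ih]

lemma val_mul_vertexProj {a b : Vtx X} (p : Path a b) : p.val θ * vertexProj θ b = p.val θ := by
  induction p with
  | nil => rw [Path.val, (isStarProjection_vertexProj H a).isIdempotentElem.eq]
  | cons p s _ => rw [Path.val, mul_assoc, Step.val_mul_vertexProj H]

lemma val_comp {a b c : Vtx X} (p : Path a b) (q : Path b c) :
    (p.comp q).val θ = p.val θ * q.val θ := by
  induction q with
  | nil => rw [Path.comp_nil, Path.val, val_mul_vertexProj H]
  | cons q s ih => rw [Path.comp_cons, Path.val, Path.val, ih, mul_assoc]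

lemma val_toPath {a b : Vtx X} (s : Step a b) :
    (Hom.toPath (V := Vtx X) s).val θ = Step.val θ s := by
  rw [Hom.toPath, Path.val, Path.val, Step.vertexProj_mul_val H]

lemma val_reverse {a b : Vtx X} (p : Path a b) : p.reverse.val θ = star (p.val θ) := by
  induction p with
  | nil => rw [Path.reverse, Path.val, (isStarProjection_vertexProj H a).isSelfAdjoint.star_eq]
  | @cons b c p s ih =>
    rw [Path.reverse, val_comp H, ih, val_toPath H, Step.val_reverse H, Path.val,
      H.star_mul_of_mul_eq_of_mul_eq (isStarProjection_vertexProj H b) (val_mul_vertexProj H p)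
        (Step.vertexProj_mul_val H s)]

lemma val_walk (u : UWord X) : u.walk.val θ = u.eval θ := by
  induction u with
  | letter x => exact val_toPath H _
  | mul u v ihu ihv =>
    show ((u.walk.cons (Step.edge u.ends.2 v.ends.1)).comp v.walk :
      Path u.ends.1 v.ends.2).val θ = _
    rw [val_comp H, Path.val, Step.val_edge, ← mul_assoc, val_mul_vertexProj H, mul_assoc,
      vertexProj_mul_val H, ihu, ihv]
    rfl
  | star u ih =>
    show (u.walk.reverse : Path u.ends.2 u.ends.1).val θ = _
    rw [val_reverse H, ih]
    rfl

lemma commute_loop_val {a : Vtx X} (p q : Path a a) : Commute (p.val θ) (q.val θ) :=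
  H.commute_of_mem_corner (vertexProj_mul_val H p) (val_mul_vertexProj H p)
    (vertexProj_mul_val H q) (val_mul_vertexProj H q)

lemma isIdempotentElem_loop_val {a : Vtx X} (p : Path a a) : IsIdempotentElem (p.val θ) :=
  H.isIdempotentElem_of_mem_corner (vertexProj_mul_val H p) (val_mul_vertexProj H p)

lemma loop_val_mul_star_self {a : Vtx X} (p : Path a a) : p.val θ * star (p.val θ) = p.val θ :=
  calc p.val θ * star (p.val θ) = p.val θ * p.val θ * star (p.val θ) := by
        rw [(isIdempotentElem_loop_val H p).eq]
    _ = p.val θ * star (p.val θ) * p.val θ := by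
        rw [mul_assoc, mul_assoc, ← val_reverse H, (commute_loop_val H p p.reverse).eq]
    _ = p.val θ := H.mul_star_mul_self _

lemma exists_val_eq_mul_backtrack_mul {a b c d : Vtx X} (p : Path a b) (t : Step c d)
    (ht : t.item ∈ p.items) :
    ∃ (Y : Path a c) (Z : Path c b),
      p.val θ = Y.val θ * (Step.val θ t * star (Step.val θ t)) * Z.val θ := by
  obtain ⟨c', d', Y, s, Z, hs, rfl⟩ := exists_eq_comp_of_mem_items p ht
  have hval : ((Y.cons s).comp Z).val θ = Y.val θ * (Step.val θ s * Z.val θ) := by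
    rw [val_comp H, Path.val, mul_assoc]
  rcases Step.val_eq_or_eq_star_of_item_eq H s t hs with ⟨rfl, rfl, h⟩ | ⟨rfl, rfl, h⟩
  · refine ⟨Y, (Hom.toPath t).comp Z, ?_⟩
    rw [hval, val_comp H, val_toPath H, h, mul_assoc, mul_assoc, H.mul_star_mul_self_mul]
  · refine ⟨Y.cons s, Z, ?_⟩
    rw [hval, Path.val, h, mul_assoc, mul_assoc, mul_assoc, H.star_mul_self_mul_star_mul]

lemma loop_val_mul_backtrack_of_items_subset {a c : Vtx X} (l : Path a a) (q : Path a c)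
    (hq : q.items \ Item.loops ⊆ l.items) : l.val θ * (q.val θ * star (q.val θ)) = l.val θ := by
  have hp := isStarProjection_vertexProj (θ := θ) H
  induction q with
  | nil =>
    rw [Path.val, (hp a).isSelfAdjoint.star_eq, (hp a).isIdempotentElem.eq, val_mul_vertexProj H]
  | @cons c d q t ih =>
    rw [Path.items] at hq
    set τ := Step.val θ t * star (Step.val θ t)
    have hqτ : (q.cons t).val θ * star ((q.cons t).val θ) = q.val θ * (τ * star (q.val θ)) := by
      rw [Path.val, H.star_mul_of_mul_eq_of_mul_eq (hp c) (val_mul_vertexProj H q)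
        (Step.vertexProj_mul_val H t)]
      simp only [τ, mul_assoc]
    refine Eq.trans ?_ (ih ((Set.sdiff_subset_sdiff_left (Set.subset_insert _ _)).trans hq))
    rw [hqτ]
    by_cases hloop : t.item ∈ Item.loops
    · have hτ : τ = vertexProj θ c := by
        simp only [τ, Step.val_eq_vertexProj_of_mem_loops H t hloop,
          (hp c).isSelfAdjoint.star_eq, (hp c).isIdempotentElem.eq]
      rw [hτ, ← mul_assoc (q.val θ), val_mul_vertexProj H]
    -- `l = Y τ Z`, and `τ` commutes with the closed walk `Z q` at the end `c` of `q`.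
    obtain ⟨Y, Z, hl⟩ :=
      exists_val_eq_mul_backtrack_mul (θ := θ) H l t (hq ⟨Set.mem_insert _ _, hloop⟩)
    have hτ : IsIdempotentElem τ := (H.isStarProjection_mul_star _).isIdempotentElem
    have hcomm : Commute τ (Z.val θ * q.val θ) := by
      have := commute_loop_val (θ := θ) H ((Hom.toPath t).comp (Hom.toPath t).reverse) (Z.comp q)
      rwa [val_comp H, val_reverse H, val_toPath H, val_comp H] at this
    have hll : l.val θ * l.val θ = l.val θ := (isIdempotentElem_loop_val H l).eq
    have hins : Y.val θ * τ * Z.val θ * (q.val θ * (τ * star (q.val θ))) =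
        Y.val θ * τ * Z.val θ * (q.val θ * star (q.val θ)) :=
      calc _ = Y.val θ * τ * (Z.val θ * q.val θ * τ) * star (q.val θ) := by simp only [mul_assoc]
        _ = Y.val θ * (τ * τ) * (Z.val θ * q.val θ) * star (q.val θ) := by
          rw [← hcomm.eq]; simp only [mul_assoc]
        _ = _ := by rw [hτ.eq]; simp only [mul_assoc]
    calc l.val θ * (q.val θ * (τ * star (q.val θ)))
        = l.val θ * (Y.val θ * τ * Z.val θ * (q.val θ * (τ * star (q.val θ)))) := by
          rw [← hl, ← mul_assoc (l.val θ) (l.val θ), hll]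
      _ = l.val θ * (q.val θ * star (q.val θ)) := by
          rw [hins, ← hl, ← mul_assoc (l.val θ) (l.val θ), hll]

lemma loop_val_eq_of_items_sdiff_eq {a : Vtx X} (p q : Path a a)
    (h : p.items \ Item.loops = q.items \ Item.loops) : p.val θ = q.val θ :=
  calc p.val θ = p.val θ * (q.val θ * star (q.val θ)) :=
        (loop_val_mul_backtrack_of_items_subset H p q (by rw [← h]; exact Set.sdiff_subset)).symm
    _ = q.val θ * (p.val θ * star (p.val θ)) := by
        rw [loop_val_mul_star_self H, loop_val_mul_star_self H, (commute_loop_val H p q).eq]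
    _ = q.val θ :=
        loop_val_mul_backtrack_of_items_subset H q p (by rw [h]; exact Set.sdiff_subset)

lemma val_eq_of_items_sdiff_eq {a b : Vtx X} (p q : Path a b)
    (h : p.items \ Item.loops = q.items \ Item.loops) : p.val θ = q.val θ := by
  have h₁ := loop_val_eq_of_items_sdiff_eq (θ := θ) H (p.reverse.comp p) (p.reverse.comp q) (by
    simp only [items_comp, items_reverse, Set.union_sdiff_distrib, h])
  have h₂ := loop_val_eq_of_items_sdiff_eq (θ := θ) H (p.comp p.reverse) (q.comp q.reverse) (by
    simp only [items_comp, items_reverse, Set.union_sdiff_distrib, h])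
  simp only [val_comp H, val_reverse H] at h₁ h₂
  calc p.val θ = p.val θ * (star (p.val θ) * p.val θ) := by rw [← mul_assoc, H.mul_star_mul_self]
    _ = q.val θ := by rw [h₁, ← mul_assoc, h₂, H.mul_star_mul_self]

end Values

end WordGraph

section AdjacencySemigroup

variable {V : Type*} (r : V → V → Prop)

lemma adjMul_none_left (p : Option (V × V)) : adjMul r none p = none := by
  rcases p with _ | ⟨_, _⟩ <;> rfl

lemma adjMul_none_right (p : Option (V × V)) : adjMul r p none = none := by
  rcases p with _ | ⟨_, _⟩ <;> rfl

open Classical in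
lemma adjMul_some_some (p q : V × V) :
    adjMul r (some p) (some q) = if r p.2 q.1 then some (p.1, q.2) else none :=
  rfl

end AdjacencySemigroup

namespace UWord

variable {X : Type*}

section evalA

variable {V : Type*} (r : V → V → Prop)

lemma evalA_congr {θ θ' : X → Option (V × V)} (u : UWord X) (h : ∀ x ∈ u.letters, θ x = θ' x) :
    u.evalA r θ = u.evalA r θ' := by
  induction u with
  | letter x => exact h x rfl
  | mul u v ihu ihv =>
    exact congrArg₂ (adjMul r) (ihu fun x hx => h x (.inl hx)) (ihv fun x hx => h x (.inr hx))
  | star u ih => exact congrArg adjStar (ih h)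

lemma evalA_eq_none {θ : X → Option (V × V)} (u : UWord X) {x : X} (hx : x ∈ u.letters)
    (h : θ x = none) : u.evalA r θ = none := by
  induction u with
  | letter y => rw [letters, Set.mem_singleton_iff] at hx; subst hx; exact h
  | mul u v ihu ihv =>
    rcases hx with hx | hx
    · exact (congrArg (adjMul r · _) (ihu hx)).trans (adjMul_none_left r _)
    · exact (congrArg (adjMul r _) (ihv hx)).trans (adjMul_none_right r _)
  | star u ih => exact congrArg adjStar (ih hx)

open Classical in
lemma evalA_some (θ : X → V × V) (u : UWord X) :
    u.evalA r (fun x => some (θ x)) =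
      if ∀ e ∈ u.edges, r (coordOf θ e.1) (coordOf θ e.2) then
        some (coordOf θ u.ends.1, coordOf θ u.ends.2)
      else none := by
  induction u with
  | letter x => simp [evalA, edges, ends, coordOf]
  | mul u v ihu ihv =>
    have hedges : (∀ e ∈ (u.mul v).edges, r (coordOf θ e.1) (coordOf θ e.2)) ↔
        (∀ e ∈ u.edges, r (coordOf θ e.1) (coordOf θ e.2)) ∧
          (∀ e ∈ v.edges, r (coordOf θ e.1) (coordOf θ e.2)) ∧
          r (coordOf θ u.ends.2) (coordOf θ v.ends.1) := by
      simp only [edges, Set.mem_union, Set.mem_singleton_iff, or_imp, forall_and, forall_eq,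
        and_assoc]
    rw [evalA, ihu, ihv]
    simp only [hedges]
    split_ifs <;> simp_all [adjMul_some_some, adjMul_none_left, adjMul_none_right, ends]
  | star u ih =>
    have hedges : u.star.edges = u.edges := rfl
    rw [evalA, ih, hedges]
    split_ifs <;> rfl

end evalA

def HoldsInReflexive (u v : UWord X) : Prop :=
  ∀ (V : Type) (rel : V → V → Prop), (∀ w, rel w w) →
    ∀ θ : X → Option (V × V), u.evalA rel θ = v.evalA rel θ

structure SameShape (u v : UWord X) : Prop where
  letters_eq : u.letters = v.letters
  ends_eq : u.ends = v.ends
  edges_sdiff_eq : u.edges \ Set.diagonal (Vtx X) = v.edges \ Set.diagonal (Vtx X)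

lemma letters_nonempty (u : UWord X) : u.letters.Nonempty := by
  induction u with
  | letter x => exact ⟨x, rfl⟩
  | mul u v ihu _ => exact ihu.mono Set.subset_union_left
  | star u ih => exact ih

lemma forall_mem_iff_forall_mem_sdiff_diagonal {V : Type*} {rel : V → V → Prop}
    (hrefl : ∀ w, rel w w) (f : Vtx X → V) (E : Set (Vtx X × Vtx X)) :
    (∀ e ∈ E, rel (f e.1) (f e.2)) ↔ ∀ e ∈ E \ Set.diagonal (Vtx X), rel (f e.1) (f e.2) :=
  ⟨fun h e he => h e he.1, fun h e he => by
    by_cases hd : e.1 = e.2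
    · rw [hd]; exact hrefl _
    · exact h e ⟨he, hd⟩⟩

lemma SameShape.holdsInReflexive {u v : UWord X} (h : u.SameShape v) : u.HoldsInReflexive v := by
  classical
  intro V rel hrefl θ
  by_cases hnone : ∃ x ∈ u.letters, θ x = none
  · obtain ⟨x, hx, hθx⟩ := hnone
    rw [evalA_eq_none rel u hx hθx, evalA_eq_none rel v (h.letters_eq ▸ hx) hθx]
  push Not at hnone
  obtain ⟨x₀, hx₀⟩ := u.letters_nonempty
  obtain ⟨p₀, -⟩ := Option.ne_none_iff_exists'.mp (hnone x₀ hx₀)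
  have hθ : ∀ x ∈ u.letters, θ x = some ((θ x).getD p₀) := fun x hx => by
    obtain ⟨p, hp⟩ := Option.ne_none_iff_exists'.mp (hnone x hx)
    rw [hp, Option.getD_some]
  rw [evalA_congr rel u hθ, evalA_congr rel v (h.letters_eq ▸ hθ), evalA_some, evalA_some,
    forall_mem_iff_forall_mem_sdiff_diagonal hrefl _ u.edges,
    forall_mem_iff_forall_mem_sdiff_diagonal hrefl _ v.edges, h.edges_sdiff_eq, h.ends_eq]

lemma HoldsInReflexive.symm {u v : UWord X} (h : u.HoldsInReflexive v) : v.HoldsInReflexive u :=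
  fun V rel hrefl θ => (h V rel hrefl θ).symm

lemma HoldsInReflexive.shape_subset {X : Type} {u v : UWord X} (h : u.HoldsInReflexive v) :
    v.letters ⊆ u.letters ∧ v.ends = u.ends ∧ v.edges \ Set.diagonal (Vtx X) ⊆ u.edges := by
  classical
  let rel : Vtx X → Vtx X → Prop := fun a b => (a, b) ∈ u.edges ∨ a = b
  let θ₀ : X → Vtx X × Vtx X := fun x => ((x, false), (x, true))
  let θ : X → Option (Vtx X × Vtx X) := fun x => if x ∈ u.letters then some (θ₀ x) else none
  have hcoord : coordOf θ₀ = id := funext fun ⟨x, b⟩ => by cases b <;> rfl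
  have hθ : ∀ x ∈ u.letters, θ x = some (θ₀ x) := fun x hx => if_pos hx
  have hu : u.evalA rel θ = some u.ends := by
    rw [evalA_congr rel u hθ, evalA_some, hcoord, if_pos fun e he => .inl he]
    rfl
  have hv : v.evalA rel θ = some u.ends := (h _ rel (fun _ => .inr rfl) θ).symm.trans hu
  have hletters : v.letters ⊆ u.letters := fun x hx => by
    by_contra hxu
    rw [evalA_eq_none rel v hx (if_neg hxu)] at hv
    exact Option.some_ne_none _ hv.symm
  rw [evalA_congr rel v fun x hx => hθ x (hletters hx), evalA_some, hcoord] at hv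
  split_ifs at hv with hedges
  exact ⟨hletters, Option.some_injective _ hv, fun e he => (hedges e he.1).resolve_right he.2⟩

lemma holdsInReflexive_iff_sameShape {X : Type} (u v : UWord X) :
    u.HoldsInReflexive v ↔ u.SameShape v := by
  refine ⟨fun h => ?_, SameShape.holdsInReflexive⟩
  obtain ⟨hl₁, he, hd₁⟩ := h.symm.shape_subset
  obtain ⟨hl₂, -, hd₂⟩ := h.shape_subset
  exact ⟨hl₁.antisymm hl₂, he, (Set.subset_sdiff.mpr ⟨hd₁, Set.disjoint_sdiff_left⟩).antisymm
    (Set.subset_sdiff.mpr ⟨hd₂, Set.disjoint_sdiff_left⟩)⟩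

instance : Mul (UWord X) := ⟨mul⟩

variable (u v : UWord X)

@[simp] lemma letters_mul : (u * v).letters = u.letters ∪ v.letters := rfl
@[simp] lemma ends_mul : (u * v).ends = (u.ends.1, v.ends.2) := rfl
@[simp] lemma edges_mul : (u * v).edges = u.edges ∪ v.edges ∪ {(u.ends.2, v.ends.1)} := rfl
@[simp] lemma eval_mul {S : Type*} [Mul S] [Star S] (θ : X → S) :
    (u * v).eval θ = u.eval θ * v.eval θ := rfl

end UWord

namespace SigmaRef

variable {S : Type*} [Semigroup S] [Star S]

lemma eval_eq_of_sameShape (H : SigmaRef S) {X : Type*} {u v : UWord X} (h : u.SameShape v)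
    (θ : X → S) : u.eval θ = v.eval θ := by
  have key : ∀ {a b a' b' : Vtx X} (p : Path a b) (q : Path a' b'), a = a' → b = b' →
      p.items \ WordGraph.Item.loops = q.items \ WordGraph.Item.loops → p.val θ = q.val θ := by
    rintro a b _ _ p q rfl rfl hpq
    exact WordGraph.val_eq_of_items_sdiff_eq H p q hpq
  rw [← WordGraph.val_walk H u, ← WordGraph.val_walk H v]
  refine key _ _ (congrArg Prod.fst h.ends_eq) (congrArg Prod.snd h.ends_eq) ?_
  rw [WordGraph.items_walk_sdiff_loops, WordGraph.items_walk_sdiff_loops, h.letters_eq,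
    h.edges_sdiff_eq]

lemma of_forall_sameShape
    (h : ∀ u v : UWord ℕ, u.SameShape v → ∀ θ : ℕ → S, u.eval θ = v.eval θ) : SigmaRef S := by
  let x : UWord ℕ := .letter 0
  let y : UWord ℕ := .letter 1
  let z : UWord ℕ := .letter 2
  have h' : ∀ u v : UWord ℕ, u.SameShape v → ∀ a b c : S,
      u.eval (fun n => if n = 0 then a else if n = 1 then b else c) =
        v.eval (fun n => if n = 0 then a else if n = 1 then b else c) :=
    fun u v huv a b c => h u v huv _
  refine ⟨fun a => ?_, fun a b c => ?_, fun a b c => ?_, fun a => ?_, fun a => ?_, fun a => ?_,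
    fun a b c => ?_, fun a b c => ?_, fun a b c => ?_, fun a b c => ?_⟩
  · simpa [x, UWord.eval] using h' x.star.star x ⟨rfl, rfl, rfl⟩ a a a
  · simpa [x, y, z, UWord.eval] using h' (x * (y * z).star) ((y * (x * z.star).star).star)
      ⟨by ext; simp [x, y, z, UWord.letters]; try aesop, rfl,
        by ext ⟨p, q⟩; simp [x, y, z, UWord.ends, UWord.edges]; try aesop⟩ a b c
  · simpa [x, y, z, UWord.eval] using h' ((x * y).star * z) (((x.star * z).star * y).star)
      ⟨by ext; simp [x, y, z, UWord.letters]; try aesop, rfl,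
        by ext ⟨p, q⟩; simp [x, y, z, UWord.ends, UWord.edges]; try aesop⟩ a b c
  · simpa [x, UWord.eval] using h' (x * x.star * x) x
      ⟨by ext; simp [x, UWord.letters]; try aesop, rfl,
        by ext ⟨p, q⟩; simp [x, UWord.ends, UWord.edges]; try aesop⟩ a a a
  · simpa [x, UWord.eval] using h' ((x * x.star).star) (x * x.star)
      ⟨by ext; simp [x, UWord.letters]; try aesop, rfl,
        by ext ⟨p, q⟩; simp [x, UWord.ends, UWord.edges]; try aesop⟩ a a a
  · simpa [x, UWord.eval] using h' (x * x * x) (x * x)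
      ⟨by ext; simp [x, UWord.letters]; try aesop, rfl,
        by ext ⟨p, q⟩; simp [x, UWord.ends, UWord.edges]; try aesop⟩ a a a
  · simpa [x, y, z, UWord.eval] using h' (x * y * x * z * x) (x * z * x * y * x * z * x)
      ⟨by ext; simp [x, y, z, UWord.letters]; try aesop, rfl,
        by ext ⟨p, q⟩; simp [x, y, z, UWord.ends, UWord.edges]; try aesop⟩ a b c
  · simpa [x, y, z, UWord.eval] using h' (x * z * x * y * x * z * x) (x * z * x * y * x)
      ⟨by ext; simp [x, y, z, UWord.letters]; try aesop, rfl,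
        by ext ⟨p, q⟩; simp [x, y, z, UWord.ends, UWord.edges]; try aesop⟩ a b c
  · simpa [x, y, z, UWord.eval] using h' (x.star * y * x * z * x) ((x * z * x).star * y * x * z * x)
      ⟨by ext; simp [x, y, z, UWord.letters]; try aesop, rfl,
        by ext ⟨p, q⟩; simp [x, y, z, UWord.ends, UWord.edges]; try aesop⟩ a b c
  · simpa [x, y, z, UWord.eval] using h' (x * y * x * z * x.star) (x * y * x * z * (x * y * x).star)
      ⟨by ext; simp [x, y, z, UWord.letters]; try aesop, rfl,
        by ext ⟨p, q⟩; simp [x, y, z, UWord.ends, UWord.edges]; try aesop⟩ a b c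

end SigmaRef

/-- Corollary: `Σ_ref` is an identity basis for the variety generated by the
adjacency semigroups of all reflexive graphs: a unary semigroup satisfies all
the identities of `Σ_ref` if and only if it satisfies every unary semigroup
identity `u ≈ v` (over a countably infinite alphabet) that holds in the
adjacency semigroup of every reflexive graph. -/
theorem Sigma_ref_is_basis {S : Type*} [Semigroup S] [Star S] :
    ((∀ x : S, star (star x) = x) ∧
     (∀ x y z : S, x * star (y * z) = star (y * star (x * star z))) ∧
     (∀ x y z : S, star (x * y) * z = star (star (star x * z) * y)) ∧
     (∀ x : S, x * star x * x = x) ∧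
     (∀ x : S, star (x * star x) = x * star x) ∧
     (∀ x : S, x * x * x = x * x) ∧
     (∀ x y z : S, x * y * x * z * x = x * z * x * y * x * z * x) ∧
     (∀ x y z : S, x * z * x * y * x * z * x = x * z * x * y * x) ∧
     (∀ x y z : S, star x * y * x * z * x = star (x * z * x) * y * x * z * x) ∧
     (∀ x y z : S, x * y * x * z * star x = x * y * x * z * star (x * y * x))) ↔
    (∀ u v : UWord ℕ,
      (∀ (V : Type) (rel : V → V → Prop), (∀ w : V, rel w w) →
        ∀ θ : ℕ → Option (V × V), u.evalA rel θ = v.evalA rel θ) →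
      ∀ θ : ℕ → S, u.eval θ = v.eval θ) := by
  constructor
  · rintro ⟨h₁, h₂, h₃, h₄, h₅, h₆, h₇, h₈, h₉, h₁₀⟩ u v huv
    exact SigmaRef.eval_eq_of_sameShape ⟨h₁, h₂, h₃, h₄, h₅, h₆, h₇, h₈, h₉, h₁₀⟩
      ((UWord.holdsInReflexive_iff_sameShape u v).mp huv)
  · intro h
    obtain ⟨h₁, h₂, h₃, h₄, h₅, h₆, h₇, h₈, h₉, h₁₀⟩ := SigmaRef.of_forall_sameShape
      fun u v huv => h u v ((UWord.holdsInReflexive_iff_sameShape u v).mpr huv)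
    exact ⟨h₁, h₂, h₃, h₄, h₅, h₆, h₇, h₈, h₉, h₁₀⟩
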